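/- For a formal Laurent series f = q^{-1} + ∑_{n≥1} a_n q^n over ℂ and any positive integer n, there exists a unique monic polynomial Q_n of degree n such that Q_n(f) - q^{-n} is a formal power series with only strictly positive powers of q. -/

import Mathlib

/-!
If `f = q⁻¹ + O(1)`, then `fᵏ = q⁻ᵏ + (higher powers of q)`. Hence, on polynomials `P`, the map
`P ↦ (coefficients of P(f) at q⁰, q⁻¹, q⁻², …)` is triangular with unit diagonal with respect
to the bases `Xᵏ` and `q⁻ᵏ`: the coefficient of `q^(-deg P)` in `P(f)` is the leading coefficient
of `P`, which gives uniqueness, and the principal part of any Laurent series is matched by a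
polynomial in `f` by subtracting off its lowest term repeatedly, which gives existence.
-/

namespace HahnSeries

variable {Γ R : Type*} [AddCommMonoid Γ] [LinearOrder Γ] [IsOrderedCancelAddMonoid Γ]

theorem coeff_mul_of_le_orderTop [NonUnitalNonAssocSemiring R] {x y : HahnSeries Γ R} {a b : Γ}
    (hx : a ≤ x.orderTop) (hy : b ≤ y.orderTop) :
    (x * y).coeff (a + b) = x.coeff a * y.coeff b := by
  rw [coeff_mul]
  refine Finset.sum_eq_single (a, b) (fun ij hij hne => ?_) (fun hab => ?_)
  · obtain ⟨hi, hj, hsum⟩ := Finset.mem_antidiagonal.mp hij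
    have hai : a ≤ ij.1 :=
      not_lt.mp fun h => hi (le_orderTop_iff_forall.mp hx _ (by exact_mod_cast h))
    have hbj : b ≤ ij.2 :=
      not_lt.mp fun h => hj (le_orderTop_iff_forall.mp hy _ (by exact_mod_cast h))
    obtain ⟨h1, h2⟩ := (add_eq_add_iff_eq_and_eq hai hbj).mp hsum.symm
    exact absurd (Prod.ext h1.symm h2.symm) hne
  · simp only [Finset.mem_antidiagonal, mem_support, and_true, not_and_or, not_not] at hab
    rcases hab with h | h <;> simp [h]

theorem coeff_pow_of_le_orderTop [Semiring R] {x : HahnSeries Γ R} {a : Γ}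
    (hx : a ≤ x.orderTop) (k : ℕ) : (x ^ k).coeff (k • a) = x.coeff a ^ k := by
  induction k with
  | zero => simp [coeff_one]
  | succ k ih =>
    have hk : ((k • a : Γ) : WithTop Γ) ≤ (x ^ k).orderTop :=
      (WithTop.coe_nsmul a k).trans_le
        ((nsmul_le_nsmul_right hx k).trans orderTop_nsmul_le_orderTop_pow)
    rw [pow_succ, succ_nsmul, coeff_mul_of_le_orderTop hk hx, ih, pow_succ]

end HahnSeries

open Polynomial

namespace LaurentSeries

variable {R : Type*} [CommRing R] {f : LaurentSeries R}

theorem coeff_aeval (f : LaurentSeries R) (P : R[X]) (m : ℤ) :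
    (aeval f P).coeff m = ∑ i ∈ Finset.range (P.natDegree + 1), P.coeff i * (f ^ i).coeff m := by
  simp [aeval_eq_sum_range, HahnSeries.coeff_sum, Algebra.smul_def, HahnSeries.algebraMap_apply']

theorem coeff_pow_eq_zero_of_lt (hf : -1 ≤ f.orderTop) (k : ℕ) {m : ℤ} (hm : m < -k) :
    (f ^ k).coeff m = 0 := by
  refine HahnSeries.coeff_eq_zero_of_lt_orderTop
    (lt_of_lt_of_le ?_ HahnSeries.orderTop_nsmul_le_orderTop_pow)
  calc (m : WithTop ℤ) < ((k • (-1 : ℤ) : ℤ) : WithTop ℤ) :=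
        WithTop.coe_lt_coe.mpr (by simpa using hm)
    _ ≤ k • f.orderTop := (WithTop.coe_nsmul _ k).trans_le (nsmul_le_nsmul_right hf k)

theorem coeff_pow_neg (hf : -1 ≤ f.orderTop) (hf₁ : f.coeff (-1) = 1) (k : ℕ) :
    (f ^ k).coeff (-k) = 1 := by
  simpa [hf₁] using HahnSeries.coeff_pow_of_le_orderTop hf k

theorem coeff_aeval_neg_natDegree (hf : -1 ≤ f.orderTop) (hf₁ : f.coeff (-1) = 1) (P : R[X]) :
    (aeval f P).coeff (-P.natDegree) = P.leadingCoeff := by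
  rw [coeff_aeval, Finset.sum_range_succ, Finset.sum_eq_zero fun j hj => ?_]
  · simp [coeff_pow_neg hf hf₁]
  · rw [coeff_pow_eq_zero_of_lt hf j (by simp at hj; omega), mul_zero]

theorem eq_of_forall_coeff_aeval_eq (hf : -1 ≤ f.orderTop) (hf₁ : f.coeff (-1) = 1)
    {P Q : R[X]} (h : ∀ m ≤ 0, (aeval f P).coeff m = (aeval f Q).coeff m) : P = Q := by
  rw [← sub_eq_zero, ← leadingCoeff_eq_zero, ← coeff_aeval_neg_natDegree hf hf₁, map_sub,
    HahnSeries.coeff_sub, h _ (by omega), sub_self]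

theorem exists_degree_lt_forall_coeff_aeval_eq (hf : -1 ≤ f.orderTop) (hf₁ : f.coeff (-1) = 1)
    (n : ℕ) (g : LaurentSeries R) (hg : ∀ m ≤ -(n : ℤ), g.coeff m = 0) :
    ∃ P : R[X], P.degree < n ∧ ∀ m ≤ 0, (aeval f P).coeff m = g.coeff m := by
  induction n generalizing g with
  | zero => exact ⟨0, by simp, fun m hm => by simp [hg m (by simpa using hm)]⟩
  | succ n ih =>
    set c := g.coeff (-n)
    obtain ⟨P, hPdeg, hP⟩ := ih (g - c • f ^ n) fun m hm => by
      rcases hm.lt_or_eq with hm | rfl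
      · simp [hg m (by omega), coeff_pow_eq_zero_of_lt hf n hm]
      · simp [c, coeff_pow_neg hf hf₁]
    refine ⟨C c * X ^ n + P, ?_, fun m hm => ?_⟩
    · exact (degree_add_le _ _).trans_lt (max_lt
        ((degree_C_mul_X_pow_le n c).trans_lt (by exact_mod_cast n.lt_succ_self))
        (hPdeg.trans (by exact_mod_cast n.lt_succ_self)))
    · simp [HahnSeries.algebraMap_apply', hP m hm]

end LaurentSeries

theorem faber_polynomial_exists_unique_general (f : LaurentSeries ℂ)
    (h₁ : f.coeff (-1) = 1) (h₂ : ∀ m : ℤ, m ≠ -1 → m ≤ 0 → f.coeff m = 0)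
    (n : ℕ) :
    ∃! Q : Polynomial ℂ, Q.Monic ∧ Q.degree = n ∧
      ∀ m : ℤ, m ≤ 0 →
        (Polynomial.aeval f Q - HahnSeries.single (-(n : ℤ)) (1 : ℂ)).coeff m = 0 := by
  have hf : -1 ≤ f.orderTop := HahnSeries.le_orderTop_iff_forall.mpr fun m hm => by
    have hm : m < -1 := WithTop.coe_lt_coe.mp hm
    exact h₂ m hm.ne (by omega)
  set g := f ^ n - HahnSeries.single (-(n : ℤ)) (1 : ℂ)
  have hg : ∀ m ≤ -(n : ℤ), g.coeff m = 0 := fun m hm => by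
    rcases hm.lt_or_eq with hm | rfl
    · simp [g, LaurentSeries.coeff_pow_eq_zero_of_lt hf n hm, HahnSeries.coeff_single_of_ne hm.ne]
    · simp [g, LaurentSeries.coeff_pow_neg hf h₁]
  obtain ⟨P, hPdeg, hP⟩ := LaurentSeries.exists_degree_lt_forall_coeff_aeval_eq hf h₁ n g hg
  have hdeg : P.degree < (X ^ n : ℂ[X]).degree := by rwa [degree_X_pow]
  refine ⟨X ^ n - P, ⟨(monic_X_pow n).sub_of_left hdeg, ?_, fun m hm => ?_⟩, fun Q hQ => ?_⟩
  · rw [degree_sub_eq_left_of_degree_lt hdeg, degree_X_pow]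
  · simp [hP m hm, g]
  · refine LaurentSeries.eq_of_forall_coeff_aeval_eq hf h₁ fun m hm => ?_
    have hQm := hQ.2.2 m hm
    rw [HahnSeries.coeff_sub, sub_eq_zero] at hQm
    simp [hQm, hP m hm, g]

/-- Faber polynomials: for a formal Laurent series `f = q⁻¹ + ∑_{n≥1} aₙ qⁿ` over `ℂ`
and any positive integer `n`, there is a unique monic polynomial `Qₙ` of degree `n`
such that `Qₙ(f) - q⁻ⁿ` has only strictly positive powers of `q`. -/
theorem faber_polynomial_exists_unique (f : LaurentSeries ℂ)
    (h₁ : f.coeff (-1) = 1) (h₂ : ∀ m : ℤ, m ≠ -1 → m ≤ 0 → f.coeff m = 0)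
    (n : ℕ) (hn : 0 < n) :
    ∃! Q : Polynomial ℂ, Q.Monic ∧ Q.degree = n ∧
      ∀ m : ℤ, m ≤ 0 →
        (Polynomial.aeval f Q - HahnSeries.single (-(n : ℤ)) (1 : ℂ)).coeff m = 0 :=
  faber_polynomial_exists_unique_general f h₁ h₂ n
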